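/- If X is a finite graph, then L = π(C₁(X,ℤ)) equals the dual lattice Z₁(X,ℤ)* = {v ∈ Z₁(X,ℝ) : ⟨v,w⟩ ∈ ℤ for all w ∈ Z₁(X,ℤ)}. -/

import Mathlib

/-- A graph in the sense of Sunada's topological crystallography: a set of vertices,
a set of edges, source and target maps, and a fixed-point free involution sending
each edge to its inverse. -/
structure SunadaGraph where
  V : Type
  E : Type
  s : E → V
  t : E → V
  inv : E → E
  s_inv : ∀ e, s (inv e) = t e
  t_inv : ∀ e, t (inv e) = s e
  inv_inv : ∀ e, inv (inv e) = e
  inv_ne : ∀ e, inv e ≠ e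

namespace SunadaGraph

variable (X : SunadaGraph)

/-- `X.IsPath x y γ` : the word of edges `γ` is a path from `x` to `y` in `X`. -/
inductive IsPath : X.V → X.V → List X.E → Prop
  | nil (x : X.V) : IsPath x x []
  | cons (e : X.E) {y : X.V} {γ : List X.E} (h : IsPath (X.t e) y γ) :
      IsPath (X.s e) y (e :: γ)

/-- A graph is connected if any two vertices are joined by a path. -/
def Connected : Prop := ∀ x y : X.V, ∃ γ : List X.E, X.IsPath x y γ

/-- An edge is a bridge if there is no path from its target to its source
avoiding both the edge and its inverse. -/
def IsBridge (e : X.E) : Prop :=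
  ¬ ∃ γ : List X.E, X.IsPath (X.t e) (X.s e) γ ∧ e ∉ γ ∧ X.inv e ∉ γ

/-- The space `C₁(X,ℝ)` of real 1-chains: formal linear combinations of edges
with `e⁻¹ = -e`, realized as finitely supported functions `c : E → ℝ` with
`c(e⁻¹) = - c(e)`. -/
noncomputable def C1 : Submodule ℝ (X.E →₀ ℝ) where
  carrier := {c | ∀ e, c (X.inv e) = - c e}
  add_mem' := by
    intro a b ha hb e
    simp only [Finsupp.add_apply, ha e, hb e]
    ring
  zero_mem' := by intro e; simp
  smul_mem' := by
    intro r c hc e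
    simp only [Finsupp.smul_apply, hc e, smul_eq_mul]
    ring

/-- The 1-chain associated to a single edge. -/
noncomputable def edgeChain (e : X.E) : ↥X.C1 :=
  ⟨Finsupp.single e 1 - Finsupp.single (X.inv e) 1, by
    intro f
    classical
    have h1 : (e = X.inv f) ↔ (X.inv e = f) := by
      constructor
      · rintro rfl; exact X.inv_inv f
      · rintro rfl; exact (X.inv_inv e).symm
    have h2 : (X.inv e = X.inv f) ↔ (e = f) := by
      constructor
      · intro h
        have := congrArg X.inv h
        rwa [X.inv_inv, X.inv_inv] at this
      · rintro rfl; rfl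
    simp only [Finsupp.sub_apply, Finsupp.single_apply, h1, h2]
    ring⟩

/-- The 1-chain `c_γ` of a path `γ`. -/
noncomputable def pathChain (γ : List X.E) : ↥X.C1 := (γ.map X.edgeChain).sum

/-- The inner product on `C₁(X,ℝ)` for which the edges form an orthonormal basis
(with `e⁻¹` counting as the negative of `e`). -/
noncomputable def chainInner (c d : ↥X.C1) : ℝ :=
  (1/2) * ((c : X.E →₀ ℝ).sum fun e x => x * (d : X.E →₀ ℝ) e)

/-- The boundary of a 1-chain. -/
noncomputable def boundary (c : ↥X.C1) : X.V →₀ ℝ :=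
  (c : X.E →₀ ℝ).sum fun e x => x • (Finsupp.single (X.t e) (1:ℝ) - Finsupp.single (X.s e) 1)

/-- A 1-cycle is a 1-chain with vanishing boundary. -/
def IsCycle (c : ↥X.C1) : Prop := X.boundary c = 0

/-- An integral 1-chain: all coefficients are integers. -/
def IsIntegral (c : ↥X.C1) : Prop := ∀ e, ∃ n : ℤ, (c : X.E →₀ ℝ) e = (n : ℝ)

/-- The support of a 1-chain: the set of edges with positive coefficient. -/
def chainSupp (c : ↥X.C1) : Set X.E := {e | 0 < (c : X.E →₀ ℝ) e}

/-- `p` is the orthogonal projection of `C₁(X,ℝ)` onto the space `Z₁(X,ℝ)` of 1-cycles: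
it takes values in `Z₁(X,ℝ)` and `c - p c` is orthogonal to every 1-cycle. -/
def IsOrthoProj (p : ↥X.C1 → ↥X.C1) : Prop :=
  (∀ c, X.IsCycle (p c)) ∧ (∀ c z, X.IsCycle z → X.chainInner (c - p c) z = 0)

/-- Two paths from `x` to `y` are homologous if one can be obtained from the other
by repeatedly inserting or deleting subwords `e e⁻¹`, and/or replacing a subword
`στ` by `τσ` where `σ` and `τ` are loops based at the same vertex. -/
inductive Homologous : X.V → X.V → List X.E → List X.E → Prop
  | refl {x y : X.V} (γ : List X.E) (h : X.IsPath x y γ) : Homologous x y γ γ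
  | cancel {x y : X.V} (γ δ : List X.E) (e : X.E)
      (h : X.IsPath x y (γ ++ e :: X.inv e :: δ)) (h' : X.IsPath x y (γ ++ δ)) :
      Homologous x y (γ ++ e :: X.inv e :: δ) (γ ++ δ)
  | swap {x y : X.V} (γ σ τ δ : List X.E) (v : X.V)
      (hσ : X.IsPath v v σ) (hτ : X.IsPath v v τ)
      (h : X.IsPath x y (γ ++ (σ ++ (τ ++ δ))))
      (h' : X.IsPath x y (γ ++ (τ ++ (σ ++ δ)))) :
      Homologous x y (γ ++ (σ ++ (τ ++ δ))) (γ ++ (τ ++ (σ ++ δ)))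
  | symm {x y : X.V} {a b : List X.E} (h : Homologous x y a b) : Homologous x y b a
  | trans {x y : X.V} {a b c : List X.E} (h1 : Homologous x y a b)
      (h2 : Homologous x y b c) : Homologous x y a c

/-- A simple path: no vertex is visited twice. -/
def IsSimplePath (x y : X.V) (γ : List X.E) : Prop :=
  X.IsPath x y γ ∧ (x :: γ.map X.t).Nodup

/-- A simple loop based at `x`: a loop in which every vertex other than `x` occurs
at most once and `x` occurs only as the initial and final vertex. -/
def IsSimpleLoop (x : X.V) (γ : List X.E) : Prop :=
  X.IsPath x x γ ∧ (x :: (γ.map X.t).dropLast).Nodup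

/-- A reduced word: no subword of the form `e e⁻¹`. -/
def Reduced (γ : List X.E) : Prop := γ.Chain' (fun a b => b ≠ X.inv a)

/-- A spanning tree: a set of edges, closed under inversion, such that the spanning
subgraph it determines is connected and has no nonempty reduced loops. -/
def IsSpanningTree (S : Set X.E) : Prop :=
  (∀ e ∈ S, X.inv e ∈ S) ∧
  (∀ x y : X.V, ∃ γ : List X.E, X.IsPath x y γ ∧ ∀ e ∈ γ, e ∈ S) ∧
  (∀ (x : X.V) (γ : List X.E), X.IsPath x x γ → (∀ e ∈ γ, e ∈ S) → X.Reduced γ → γ = [])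

/-- The quotient of a set of 1-chains by the translation action of the
integral 1-cycles. -/
def transQuot (S : Set ↥X.C1) : Type :=
  Quot (fun a b : S => ∃ z : ↥X.C1, X.IsCycle z ∧ X.IsIntegral z ∧ (b : ↥X.C1) = (a : ↥X.C1) + z)

end SunadaGraph

/-!
Pairing two integral chains gives an integer, and `π` does not change pairings with cycles,
so `π(C₁(X,ℤ)) ⊆ Z₁(X,ℤ)*`.

Conversely, an orientation `O` identifies `C₁(X,ℤ)` with `ℤ^O`, and `Z₁(X,ℤ)` is the kernel of
the boundary map into the torsion-free group `C₀(X,ℝ)`; so `C₁(X,ℤ) / Z₁(X,ℤ)` is free and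
`Z₁(X,ℤ)` is a direct summand. For `v ∈ Z₁(X,ℤ)*` the functional `⟨v, ·⟩` on `Z₁(X,ℤ)` therefore
extends to `C₁(X,ℤ)`, where it is `⟨c, ·⟩` for an integral chain `c`. Then `π c - v` is a real
cycle orthogonal to every integral cycle, and it vanishes: a nonzero real cycle `u` contains a
closed walk along edges on which `u` is positive, and the chain of that walk is an integral cycle
pairing positively with `u`.
-/

theorem LinearMap.exists_retraction_ker {R M N : Type*} [CommRing R] [IsDomain R]
    [IsPrincipalIdealRing R] [AddCommGroup M] [Module R M] [Module.Finite R M]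
    [AddCommGroup N] [Module R N] [Module.IsTorsionFree R N] (f : M →ₗ[R] N) :
    ∃ r : M →ₗ[R] LinearMap.ker f, ∀ x : LinearMap.ker f, r x = x := by
  have : Module.IsTorsionFree R (M ⧸ LinearMap.ker f) :=
    Function.Injective.moduleIsTorsionFree ((LinearMap.ker f).liftQ f le_rfl)
      (LinearMap.ker_eq_bot.mp ((LinearMap.ker f).ker_liftQ_eq_bot _ _ le_rfl)) (map_smul _)
  obtain ⟨sec, hsec⟩ := (LinearMap.ker f).mkQ.exists_rightInverse_of_surjective
    (LinearMap.ker f).range_mkQ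
  have hmem : ∀ x, x - sec ((LinearMap.ker f).mkQ x) ∈ LinearMap.ker f := fun x => by
    rw [← Submodule.Quotient.mk_eq_zero, ← Submodule.mkQ_apply, map_sub,
      ← LinearMap.comp_apply _ sec, hsec, LinearMap.id_apply, sub_self]
  refine ⟨(LinearMap.id - sec ∘ₗ (LinearMap.ker f).mkQ).codRestrict _ hmem, fun x => ?_⟩
  ext
  simp [(Submodule.Quotient.mk_eq_zero _).mpr x.2]

theorem Function.exists_iterate_isPeriodicPt {α : Type*} [Finite α] (f : α → α) (x : α) :
    ∃ m n, 0 < n ∧ Function.IsPeriodicPt f n (f^[m] x) := by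
  obtain ⟨i, j, hij, h⟩ := Finite.exists_ne_map_eq_of_infinite fun k => f^[k] x
  wlog hlt : i < j generalizing i j
  · exact this j i hij.symm h.symm (by omega)
  refine ⟨i, j - i, by omega, ?_⟩
  rw [Function.IsPeriodicPt, Function.IsFixedPt, ← Function.iterate_add_apply,
    Nat.sub_add_cancel hlt.le, ← h]

namespace SunadaGraph

variable (X : SunadaGraph)

lemma inv_involutive : Function.Involutive X.inv := X.inv_inv

@[simp]
lemma coe_C1_apply_inv (c : X.C1) (e : X.E) :
    (c : X.E →₀ ℝ) (X.inv e) = -(c : X.E →₀ ℝ) e :=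
  c.2 e

noncomputable def chainInnerₗ : X.C1 →ₗ[ℝ] X.C1 →ₗ[ℝ] ℝ :=
  LinearMap.mk₂ ℝ X.chainInner
    (fun c c' d => by
      simp only [chainInner, Submodule.coe_add]
      rw [Finsupp.sum_add_index' (fun _ => zero_mul _) (fun _ _ _ => add_mul _ _ _), mul_add])
    (fun r c d => by
      simp only [chainInner, Submodule.coe_smul, smul_eq_mul]
      rw [Finsupp.sum_smul_index (fun _ => zero_mul _), Finsupp.mul_sum, Finsupp.mul_sum,
        Finsupp.mul_sum]
      simp only [mul_assoc, mul_left_comm])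
    (fun c d d' => by
      simp only [chainInner, Submodule.coe_add, Finsupp.add_apply, mul_add, Finsupp.sum_add])
    (fun r c d => by
      simp only [chainInner, Submodule.coe_smul, Finsupp.smul_apply, smul_eq_mul,
        Finsupp.mul_sum, mul_left_comm])

noncomputable def boundaryₗ : X.C1 →ₗ[ℝ] X.V →₀ ℝ :=
  Finsupp.linearCombination ℝ (fun e => Finsupp.single (X.t e) 1 - Finsupp.single (X.s e) 1)
    ∘ₗ X.C1.subtype

@[simp]
lemma boundaryₗ_apply (c : X.C1) : X.boundaryₗ c = X.boundary c := rfl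

@[simp]
lemma chainInnerₗ_apply (c d : X.C1) : X.chainInnerₗ c d = X.chainInner c d := rfl

lemma chainInner_sub_left (a b d : X.C1) :
    X.chainInner (a - b) d = X.chainInner a d - X.chainInner b d :=
  X.chainInnerₗ.map_sub₂ a b d

lemma boundary_sub (c d : X.C1) : X.boundary (c - d) = X.boundary c - X.boundary d :=
  X.boundaryₗ.map_sub c d

variable {X} in
lemma IsCycle.sub {c d : X.C1} (hc : X.IsCycle c) (hd : X.IsCycle d) : X.IsCycle (c - d) := by
  rw [IsCycle, boundary_sub, hc, hd, sub_self]

lemma chainInner_orthoProj {π : X.C1 → X.C1} (hπ : X.IsOrthoProj π) (c : X.C1) {w : X.C1}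
    (hw : X.IsCycle w) : X.chainInner (π c) w = X.chainInner c w := by
  have := hπ.2 c w hw
  rw [chainInner_sub_left, sub_eq_zero] at this
  exact this.symm

lemma edgeChain_coe (e : X.E) :
    (X.edgeChain e : X.E →₀ ℝ) = Finsupp.single e 1 - Finsupp.single (X.inv e) 1 := rfl

lemma boundary_edgeChain (e : X.E) :
    X.boundary (X.edgeChain e) =
      (2 : ℝ) • (Finsupp.single (X.t e) 1 - Finsupp.single (X.s e) 1) := by
  rw [← boundaryₗ_apply, boundaryₗ, LinearMap.comp_apply, Submodule.subtype_apply, edgeChain_coe,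
    map_sub, Finsupp.linearCombination_single, Finsupp.linearCombination_single, X.t_inv, X.s_inv]
  module

@[simp]
lemma pathChain_nil : X.pathChain [] = 0 := rfl

@[simp]
lemma pathChain_cons (e : X.E) (γ : List X.E) :
    X.pathChain (e :: γ) = X.edgeChain e + X.pathChain γ := by
  simp [pathChain]

lemma boundary_pathChain {x y : X.V} {γ : List X.E} (h : X.IsPath x y γ) :
    X.boundary (X.pathChain γ) = (2 : ℝ) • (Finsupp.single y 1 - Finsupp.single x 1) := by
  induction h with
  | nil x => simp [← boundaryₗ_apply]
  | cons e _ ih =>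
    rw [pathChain_cons, ← boundaryₗ_apply, map_add, boundaryₗ_apply, boundaryₗ_apply, ih,
      boundary_edgeChain]
    module

lemma isCycle_pathChain {x : X.V} {γ : List X.E} (h : X.IsPath x x γ) :
    X.IsCycle (X.pathChain γ) := by
  simp [IsCycle, X.boundary_pathChain h]

lemma isPath_iterate {ι : Type*} (edge : ι → X.E) (next : ι → ι)
    (hnext : ∀ i, X.s (edge (next i)) = X.t (edge i)) (n : ℕ) (i : ι) :
    X.IsPath (X.s (edge i)) (X.s (edge (next^[n] i)))
      ((List.range n).map fun k => edge (next^[k] i)) := by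
  induction n generalizing i with
  | zero => exact IsPath.nil _
  | succ n ih =>
    rw [List.range_succ_eq_map, List.map_cons, List.map_map]
    have hcomp : (fun k => edge (next^[k] i)) ∘ Nat.succ = fun k => edge (next^[k] (next i)) := by
      ext k
      simp [Function.iterate_succ_apply]
    rw [hcomp, Function.iterate_succ_apply]
    exact IsPath.cons (edge i) (hnext i ▸ ih (next i))

def integralChains : AddSubgroup X.C1 where
  carrier := {c | X.IsIntegral c}
  add_mem' {c d} hc hd e := by
    obtain ⟨m, hm⟩ := hc e
    obtain ⟨n, hn⟩ := hd e
    exact ⟨m + n, by simp [hm, hn]⟩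
  zero_mem' _ := ⟨0, by simp⟩
  neg_mem' {c} hc e := by
    obtain ⟨m, hm⟩ := hc e
    exact ⟨-m, by simp [hm]⟩

@[simp]
lemma mem_integralChains (c : X.C1) : c ∈ X.integralChains ↔ X.IsIntegral c := Iff.rfl

lemma isIntegral_edgeChain (e : X.E) : X.IsIntegral (X.edgeChain e) := by
  classical
  intro f
  refine ⟨(if e = f then 1 else 0) - (if X.inv e = f then 1 else 0), ?_⟩
  simp only [edgeChain_coe, Finsupp.sub_apply, Finsupp.single_apply]
  split_ifs <;> norm_num

lemma isIntegral_pathChain (γ : List X.E) : X.IsIntegral (X.pathChain γ) :=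
  X.integralChains.list_sum_mem <| by simpa using fun e _ => X.isIntegral_edgeChain e

lemma exists_pos_of_ne_zero {u : X.C1} (hu : u ≠ 0) : ∃ e, 0 < (u : X.E →₀ ℝ) e := by
  by_contra! h
  refine hu (Subtype.ext (Finsupp.ext fun e => le_antisymm (h e) ?_))
  simpa using h (X.inv e)

section Finite

variable [Fintype X.E]

lemma chainInner_eq_sum (c d : X.C1) :
    X.chainInner c d = (1 / 2) * ∑ e, (c : X.E →₀ ℝ) e * (d : X.E →₀ ℝ) e := by
  rw [chainInner, Finsupp.sum_fintype _ _ (fun _ => zero_mul _)]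

lemma chainInner_edgeChain (u : X.C1) (e : X.E) :
    X.chainInner u (X.edgeChain e) = (u : X.E →₀ ℝ) e := by
  classical
  simp only [chainInner_eq_sum, edgeChain_coe, Finsupp.sub_apply, Finsupp.single_apply, mul_sub,
    mul_ite, mul_one, mul_zero, Finset.sum_sub_distrib, Finset.sum_ite_eq, Finset.mem_univ,
    if_true, coe_C1_apply_inv]
  ring

lemma chainInner_pathChain (u : X.C1) (γ : List X.E) :
    X.chainInner u (X.pathChain γ) = (γ.map fun e => (u : X.E →₀ ℝ) e).sum := by
  induction γ with
  | nil => simp [← chainInnerₗ_apply]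
  | cons e γ ih =>
    rw [pathChain_cons, ← chainInnerₗ_apply, map_add, chainInnerₗ_apply, chainInnerₗ_apply, ih,
      chainInner_edgeChain, List.map_cons, List.sum_cons]

lemma boundary_apply [DecidableEq X.V] (c : X.C1) (y : X.V) :
    X.boundary c y = 2 * ∑ f with X.t f = y, (c : X.E →₀ ℝ) f := by
  have hout : ∑ f, (if X.s f = y then (c : X.E →₀ ℝ) f else 0)
      = -∑ f, (if X.t f = y then (c : X.E →₀ ℝ) f else 0) := by
    rw [← Finset.sum_neg_distrib]
    refine Fintype.sum_equiv X.inv_involutive.toPerm _ _ fun f => ?_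
    simp only [Function.Involutive.coe_toPerm, X.t_inv, coe_C1_apply_inv]
    split_ifs <;> simp
  rw [boundary, Finsupp.sum_fintype _ _ (by simp), Finset.sum_apply']
  simp only [Finsupp.smul_apply, Finsupp.sub_apply, Finsupp.single_apply, smul_eq_mul, mul_sub,
    Finset.sum_sub_distrib, Finset.sum_filter, mul_ite, mul_one, mul_zero]
  rw [hout]
  ring

lemma exists_out_edge_pos {u : X.C1} (hu : X.IsCycle u) {e : X.E}
    (he : 0 < (u : X.E →₀ ℝ) e) : ∃ f, X.s f = X.t e ∧ 0 < (u : X.E →₀ ℝ) f := by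
  classical
  have hin : ∑ f with X.t f = X.t e, (u : X.E →₀ ℝ) f = 0 := by
    have := X.boundary_apply u (X.t e)
    rw [show X.boundary u = 0 from hu, Finsupp.zero_apply] at this
    linarith
  obtain ⟨f, hf, hneg⟩ : ∃ f, X.t f = X.t e ∧ (u : X.E →₀ ℝ) f < 0 := by
    by_contra! hnonneg
    have := Finset.single_le_sum (fun f hf => hnonneg f (Finset.mem_filter.mp hf).2)
      (Finset.mem_filter.mpr ⟨Finset.mem_univ e, rfl⟩)
    linarith
  exact ⟨X.inv f, by simpa [X.s_inv] using hf, by simpa using hneg⟩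

lemma exists_integral_cycle_chainInner_pos {u : X.C1} (hu : X.IsCycle u) (hne : u ≠ 0) :
    ∃ w, X.IsCycle w ∧ X.IsIntegral w ∧ 0 < X.chainInner u w := by
  obtain ⟨e₀, he₀⟩ := X.exists_pos_of_ne_zero hne
  choose next hnext using fun p : {e // 0 < (u : X.E →₀ ℝ) e} => X.exists_out_edge_pos hu p.2
  let succ (p : {e // 0 < (u : X.E →₀ ℝ) e}) : {e // 0 < (u : X.E →₀ ℝ) e} :=
    ⟨next p, (hnext p).2⟩
  obtain ⟨m, n, hn, hper⟩ := Function.exists_iterate_isPeriodicPt succ ⟨e₀, he₀⟩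
  have hloop := X.isPath_iterate Subtype.val succ (fun p => (hnext p).1) n (succ^[m] ⟨e₀, he₀⟩)
  rw [hper.eq] at hloop
  refine ⟨_, X.isCycle_pathChain hloop, X.isIntegral_pathChain _, ?_⟩
  rw [chainInner_pathChain, List.map_map]
  exact List.sum_pos _ (by simpa using fun k _ => (succ^[k] _).2) (by simp; omega)

lemma eq_zero_of_forall_integral_cycle_chainInner_eq_zero {u : X.C1} (hu : X.IsCycle u)
    (h : ∀ w, X.IsCycle w → X.IsIntegral w → X.chainInner u w = 0) : u = 0 := by
  by_contra hne
  obtain ⟨w, hw, hwi, hpos⟩ := X.exists_integral_cycle_chainInner_pos hu hne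
  exact hpos.ne' (h w hw hwi)

end Finite

def IsOrientation (O : Finset X.E) : Prop := ∀ e, e ∈ O ↔ X.inv e ∉ O

lemma exists_isOrientation [Fintype X.E] : ∃ O : Finset X.E, X.IsOrientation O := by
  classical
  let φ := Fintype.equivFin X.E
  refine ⟨({e | φ e < φ (X.inv e)} : Finset X.E), fun e => ?_⟩
  have : φ e ≠ φ (X.inv e) := φ.injective.ne (X.inv_ne e).symm
  simp only [Finset.mem_filter, Finset.mem_univ, true_and, X.inv_inv, not_lt]
  omega

variable (O : Finset X.E)

noncomputable def ofCoord : (O → ℤ) →ₗ[ℤ] X.C1 :=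
  Fintype.linearCombination ℤ fun e => X.edgeChain e

lemma isIntegral_ofCoord (g : O → ℤ) : X.IsIntegral (X.ofCoord O g) :=
  X.integralChains.sum_mem fun e _ => X.integralChains.zsmul_mem (X.isIntegral_edgeChain e) _

namespace IsOrientation

variable {X O} (hO : X.IsOrientation O)
include hO

lemma inv_mem_of_notMem {e : X.E} (he : e ∉ O) : X.inv e ∈ O := by
  rwa [hO, X.inv_inv]

lemma chainInner_eq_sum [Fintype X.E] (c d : X.C1) :
    X.chainInner c d = ∑ e ∈ O, (c : X.E →₀ ℝ) e * (d : X.E →₀ ℝ) e := by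
  classical
  have hcompl : ∑ e ∈ Oᶜ, (c : X.E →₀ ℝ) e * (d : X.E →₀ ℝ) e
      = ∑ e ∈ O, (c : X.E →₀ ℝ) e * (d : X.E →₀ ℝ) e :=
    Finset.sum_nbij' X.inv X.inv (fun e he => hO.inv_mem_of_notMem (Finset.mem_compl.mp he))
      (fun e he => Finset.mem_compl.mpr ((hO e).mp he)) (fun e _ => X.inv_inv e)
      (fun e _ => X.inv_inv e) (fun e _ => by simp)
  rw [X.chainInner_eq_sum, ← Finset.sum_add_sum_compl O, hcompl]
  ring

lemma ext {c d : X.C1} (h : ∀ e ∈ O, (c : X.E →₀ ℝ) e = (d : X.E →₀ ℝ) e) : c = d := by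
  refine Subtype.ext (Finsupp.ext fun e => ?_)
  by_cases he : e ∈ O
  · exact h e he
  · simpa using h _ (hO.inv_mem_of_notMem he)

lemma edgeChain_apply [DecidableEq X.E] {e f : X.E} (he : e ∈ O) (hf : f ∈ O) :
    (X.edgeChain e : X.E →₀ ℝ) f = if e = f then 1 else 0 := by
  have : X.inv e ≠ f := fun h => (hO e).mp he (h ▸ hf)
  simp [edgeChain_coe, Finsupp.single_apply, this]

lemma ofCoord_apply (g : O → ℤ) (e : O) : (X.ofCoord O g : X.E →₀ ℝ) e = g e := by
  classical
  simp [ofCoord, Fintype.linearCombination_apply, Finsupp.finsetSum_apply,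
    hO.edgeChain_apply _ e.2]

lemma exists_ofCoord_eq {w : X.C1} (hw : X.IsIntegral w) : ∃ g, X.ofCoord O g = w := by
  choose g hg using hw
  exact ⟨fun e => g e, hO.ext fun e he => by rw [hO.ofCoord_apply _ ⟨e, he⟩, hg]⟩

lemma chainInner_ofCoord [Fintype X.E] (g h : O → ℤ) :
    X.chainInner (X.ofCoord O g) (X.ofCoord O h) = ∑ e, (g e : ℝ) * h e := by
  rw [hO.chainInner_eq_sum, ← Finset.sum_coe_sort O]
  simp only [hO.ofCoord_apply]

end IsOrientation

variable [Fintype X.E]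

lemma exists_chainInner_eq_intCast {c w : X.C1} (hc : X.IsIntegral c) (hw : X.IsIntegral w) :
    ∃ n : ℤ, X.chainInner c w = n := by
  obtain ⟨O, hO⟩ := X.exists_isOrientation
  choose m hm using hc
  choose n hn using hw
  exact ⟨∑ e ∈ O, m e * n e, by simp [hO.chainInner_eq_sum, hm, hn]⟩

lemma exists_integral_chainInner_eq {v : X.C1}
    (hv : ∀ w, X.IsCycle w → X.IsIntegral w → ∃ n : ℤ, X.chainInner v w = n) :
    ∃ c, X.IsIntegral c ∧
      ∀ w, X.IsCycle w → X.IsIntegral w → X.chainInner c w = X.chainInner v w := by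
  classical
  obtain ⟨O, hO⟩ := X.exists_isOrientation
  let boundaryO := X.boundaryₗ.restrictScalars ℤ ∘ₗ X.ofCoord O
  obtain ⟨r, hr⟩ := LinearMap.exists_retraction_ker boundaryO
  -- `⟨v, ·⟩` on the integral cycles, extended through `r`; integer-valued since `r` lands there.
  let ψ : (O → ℤ) →ₗ[ℤ] ℝ :=
    (X.chainInnerₗ v).restrictScalars ℤ ∘ₗ X.ofCoord O ∘ₗ (LinearMap.ker boundaryO).subtype ∘ₗ r
  choose n hn using fun e : O => hv _ (r (Pi.single e 1)).2 (X.isIntegral_ofCoord O _)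
  refine ⟨X.ofCoord O n, X.isIntegral_ofCoord O n, fun w hw hwi => ?_⟩
  obtain ⟨g, rfl⟩ := hO.exists_ofCoord_eq hwi
  have hsingle (e : O) : (fun j => if e = j then 1 else 0) = Pi.single e (1 : ℤ) := by
    ext j
    rw [Pi.single_apply]
    exact if_congr eq_comm rfl rfl
  calc X.chainInner (X.ofCoord O n) (X.ofCoord O g) = ∑ e, (n e : ℝ) * g e :=
        hO.chainInner_ofCoord n g
    _ = ψ g := by
        simp only [LinearMap.pi_apply_eq_sum_univ ψ g, hsingle]
        simp [ψ, ← hn, mul_comm]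
    _ = X.chainInner v (X.ofCoord O g) := by simp [ψ, hr ⟨g, hw⟩]

end SunadaGraph

theorem lattice_eq_dual_lattice_general (X : SunadaGraph) [Fintype X.E]
    (π : ↥X.C1 → ↥X.C1) (hπ : X.IsOrthoProj π) :
    {v : ↥X.C1 | ∃ c : ↥X.C1, X.IsIntegral c ∧ v = π c} =
    {v : ↥X.C1 | X.IsCycle v ∧
      ∀ w : ↥X.C1, X.IsCycle w → X.IsIntegral w →
        ∃ n : ℤ, X.chainInner v w = (n : ℝ)} := by
  ext v
  constructor
  · rintro ⟨c, hc, rfl⟩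
    refine ⟨hπ.1 c, fun w hw hwi => ?_⟩
    rw [X.chainInner_orthoProj hπ c hw]
    exact X.exists_chainInner_eq_intCast hc hwi
  · rintro ⟨hv, hdual⟩
    obtain ⟨c, hc, hcv⟩ := X.exists_integral_chainInner_eq hdual
    refine ⟨c, hc, (sub_eq_zero.mp ?_).symm⟩
    refine X.eq_zero_of_forall_integral_cycle_chainInner_eq_zero ((hπ.1 c).sub hv)
      fun w hw hwi => ?_
    rw [X.chainInner_sub_left, X.chainInner_orthoProj hπ c hw, hcv w hw hwi, sub_self]

/-- Lemma of Bacher–de la Harpe–Nagnibeda.  For a finite graph `X`,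
the lattice `L = π(C₁(X,ℤ))` equals the dual lattice
`Z₁(X,ℤ)* = {v ∈ Z₁(X,ℝ) : ⟨v,w⟩ ∈ ℤ for all w ∈ Z₁(X,ℤ)}`. -/
theorem lattice_eq_dual_lattice (X : SunadaGraph) [Fintype X.V] [Fintype X.E]
    (π : ↥X.C1 → ↥X.C1) (hπ : X.IsOrthoProj π) :
    {v : ↥X.C1 | ∃ c : ↥X.C1, X.IsIntegral c ∧ v = π c} =
    {v : ↥X.C1 | X.IsCycle v ∧
      ∀ w : ↥X.C1, X.IsCycle w → X.IsIntegral w →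
        ∃ n : ℤ, X.chainInner v w = (n : ℝ)} :=
  lattice_eq_dual_lattice_general X π hπ
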